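/- arXiv:1910.06665 — 2 statements merged into one kernel-verified Lean document; each statement's English description precedes it below -/
import Mathlib

section
/- Let M = (E,*,cx) be a finite oriented matroid and 𝔗 its set of topes. Then (E,*,𝔗) is an acycloid. Moreover, M is an oriented geometry (i.e. finite, with no loops, and all singletons closed) if and only if (E,*,𝔗) is a simple acycloid (all parallelism classes are singletons). -/
/-!
A sharp `F` stays sharp when an element `x` with `x* ∉ F` is added and
the closure taken, so in the finite case every sharp lies in a hemispace. Given hemispaces
`H₁ ≠ H₂`, take a hemispace `H ≠ H₁` containing `H₁ ∩ H₂` with `H₁ ∩ H` as large as possible.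
Exchange arguments on the sharp `H₁ ∩ H` show `H₁ \ H ⊆ cx {e}` for every `e ∈ H₁ \ H`, so
flipping `H₁` along `cx {e}` produces `H`. Separating points by hemispaces identifies the
parallelism class of a non-loop `e` with `cx {e} \ L` and that of a loop with `L`, which gives
the characterization of simple tope acycloids.
-/

/-- An oriented matroid: a ground set `E` with a fixed-point-free involution `star`
and a finitary closure operator `cx` satisfying axioms (M4)-(M6). -/
structure OMatroid (E : Type*) where
  star : E → E
  cx : Set E → Set E
  star_star : ∀ x, star (star x) = x
  star_ne : ∀ x, star x ≠ x
  subset_cx : ∀ A : Set E, A ⊆ cx A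
  cx_mono : ∀ ⦃A B : Set E⦄, A ⊆ B → cx A ⊆ cx B
  cx_cx : ∀ A : Set E, cx (cx A) = cx A
  finitary : ∀ (A : Set E) (x : E), x ∈ cx A → ∃ B ⊆ A, B.Finite ∧ x ∈ cx B
  cx_star : ∀ A : Set E, cx (star '' A) = star '' cx A
  M5 : ∀ (A : Set E) (x : E), x ∈ cx (A ∪ {star x}) → x ∈ cx A
  M6 : ∀ (A : Set E) (x y : E), x ∈ cx (A ∪ {star y}) → x ∉ cx A →
        y ∈ cx ((A \ {y}) ∪ {star x})

namespace OMatroid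

variable {E : Type*} (M : OMatroid E)

/-- A circuit: a minimal nonempty subset `C` with `C* ⊆ cx C`. -/
def IsCircuit (C : Set E) : Prop :=
  C.Nonempty ∧ M.star '' C ⊆ M.cx C ∧
    ∀ D ⊆ C, D.Nonempty → M.star '' D ⊆ M.cx D → D = C

/-- The set of loops. -/
def loops : Set E := M.cx ∅

def IsClosed (F : Set E) : Prop := M.cx F = F

/-- A sharp: a closed set `F` with `F ∩ F* = L`. -/
def IsSharp (F : Set E) : Prop := M.IsClosed F ∧ F ∩ M.star '' F = M.loops

/-- A hemispace: a closed set `H` with `H ∪ H* = E` and `H ∩ H* = L`. -/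
def IsHemispace (H : Set E) : Prop :=
  M.IsClosed H ∧ H ∪ M.star '' H = Set.univ ∧ H ∩ M.star '' H = M.loops

end OMatroid

section Acycloid

variable {E : Type*}

/-- `(E, star, T)` is a preacycloid: `star` is a fixed-point-free involution, each
tope `H ∈ T` satisfies `H ∩ H* = ∅` and `H ∪ H* = E \ L` (where `L = E \ ⋃ T`), and
`T` is `*`-stable. -/
def IsPreacycloid (star : E → E) (T : Set (Set E)) : Prop :=
  (∀ x, star (star x) = x) ∧ (∀ x, star x ≠ x) ∧
  (∀ H ∈ T, H ∩ star '' H = ∅ ∧ H ∪ star '' H = ⋃₀ T) ∧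
  (∀ H ∈ T, star '' H ∈ T)

/-- Two elements are parallel if they lie in exactly the same topes. -/
def AcycParallel (T : Set (Set E)) (e f : E) : Prop := ∀ H ∈ T, (e ∈ H ↔ f ∈ H)

/-- The parallelism class of an element. -/
def pClass (T : Set (Set E)) (e : E) : Set E := {f | AcycParallel T e f}

/-- An acycloid: a preacycloid with at least one tope satisfying the exchange axiom (A4). -/
def IsAcycloid (star : E → E) (T : Set (Set E)) : Prop :=
  IsPreacycloid star T ∧ T.Nonempty ∧
  ∀ H₁ ∈ T, ∀ H₂ ∈ T, H₁ ≠ H₂ →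
    ∃ e ∈ H₁ \ H₂, (H₁ \ pClass T e) ∪ star '' pClass T e ∈ T

end Acycloid

/-- The set of topes of an oriented matroid: sets `H \ L` for `H` a hemispace. -/
def OMatroid.topes {E : Type*} (M : OMatroid E) : Set (Set E) :=
  {A | ∃ H : Set E, M.IsHemispace H ∧ A = H \ M.loops}

namespace OMatroid

variable {E : Type*} (M : OMatroid E)

lemma star_involutive : Function.Involutive M.star := M.star_star

lemma star_injective : Function.Injective M.star := M.star_involutive.injective

lemma mem_star_image {A : Set E} {x : E} : x ∈ M.star '' A ↔ M.star x ∈ A :=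
  Set.mem_image_iff_of_inverse M.star_involutive.leftInverse M.star_involutive.rightInverse

lemma star_image_star_image (A : Set E) : M.star '' (M.star '' A) = A := by
  ext x
  rw [mem_star_image, mem_star_image, M.star_star]

lemma cx_singleton_star (e : E) : M.cx {M.star e} = M.star '' M.cx {e} := by
  rw [← M.cx_star, Set.image_singleton]

lemma star_image_loops : M.star '' M.loops = M.loops := by
  simpa [loops] using (M.cx_star ∅).symm

lemma star_mem_loops {x : E} : M.star x ∈ M.loops ↔ x ∈ M.loops := by
  rw [← M.mem_star_image, M.star_image_loops]

lemma star_image_diff_loops (A : Set E) : M.star '' (A \ M.loops) = M.star '' A \ M.loops := by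
  rw [Set.image_sdiff M.star_injective, M.star_image_loops]

lemma loops_subset_cx (A : Set E) : M.loops ⊆ M.cx A :=
  M.cx_mono (Set.empty_subset A)

lemma isClosed_cx (A : Set E) : M.IsClosed (M.cx A) := M.cx_cx A

lemma cx_subset_cx {A B : Set E} (h : A ⊆ M.cx B) : M.cx A ⊆ M.cx B :=
  (M.cx_mono h).trans (M.cx_cx B).subset

lemma cx_union_eq_of_subset {A B : Set E} (h : B ⊆ M.cx A) : M.cx (A ∪ B) = M.cx A :=
  (M.cx_subset_cx (Set.union_subset (M.subset_cx A) h)).antisymm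
    (M.cx_mono Set.subset_union_left)

lemma subset_cx_union_singleton (A : Set E) (x : E) : A ⊆ M.cx (A ∪ {x}) :=
  Set.subset_union_left.trans (M.subset_cx _)

lemma mem_cx_union_singleton (A : Set E) (x : E) : x ∈ M.cx (A ∪ {x}) :=
  M.subset_cx _ (Or.inr rfl)

lemma star_mem_cx_union_of_mem_cx_union {A : Set E} {x y : E} (hx : x ∈ M.cx (A ∪ {y}))
    (hxA : x ∉ M.cx A) : M.star y ∈ M.cx (A ∪ {M.star x}) :=
  M.cx_mono (Set.union_subset_union_left _ Set.sdiff_subset)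
    (M.M6 A x (M.star y) (by rwa [M.star_star]) hxA)

lemma mem_cx_singleton_comm {e f : E} (hf : f ∈ M.cx {e}) (hfL : f ∉ M.loops) :
    e ∈ M.cx {f} := by
  have h := M.star_mem_cx_union_of_mem_cx_union (A := ∅) (by rwa [Set.empty_union]) hfL
  rwa [Set.empty_union, M.cx_singleton_star, mem_star_image, M.star_star] at h

variable {M}

lemma IsClosed.cx_subset {F A : Set E} (hF : M.IsClosed F) (hA : A ⊆ F) : M.cx A ⊆ F :=
  hF ▸ M.cx_mono hA

lemma IsClosed.loops_subset {F : Set E} (hF : M.IsClosed F) : M.loops ⊆ F :=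
  hF.cx_subset (Set.empty_subset F)

lemma IsSharp.mem_loops {F : Set E} (hF : M.IsSharp F) {y : E} (hy : y ∈ F)
    (hy' : M.star y ∈ F) : y ∈ M.loops :=
  hF.2 ▸ ⟨hy, M.mem_star_image.2 hy'⟩

lemma IsClosed.isSharp {F : Set E} (hF : M.IsClosed F)
    (h : ∀ y ∈ F, M.star y ∈ F → y ∈ M.loops) : M.IsSharp F :=
  ⟨hF, Set.Subset.antisymm (fun y hy => h y hy.1 (M.mem_star_image.1 hy.2)) fun _ hy =>
    ⟨hF.loops_subset hy, M.mem_star_image.2 (hF.loops_subset (M.star_mem_loops.2 hy))⟩⟩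

variable (M) in
lemma isSharp_loops : M.IsSharp M.loops :=
  (M.isClosed_cx ∅).isSharp fun _ hy _ => hy

/-- A point `z ∈ cx (F ∪ {x})` outside `F` gives `x* ∈ cx (F ∪ {z*})` by (M6), so `z*` cannot
lie in `cx (F ∪ {x})` as well: (M5) would then put `x*` into `F`. -/
lemma IsSharp.cx_union_singleton {F : Set E} (hF : M.IsSharp F) {x : E}
    (hx : M.star x ∉ F) : M.IsSharp (M.cx (F ∪ {x})) := by
  set S := M.cx (F ∪ {x})
  have hmem : ∀ z ∈ S, M.star z ∈ S → z ∈ F := by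
    intro z hz hz'
    by_contra hzF
    have h₁ : M.star x ∈ M.cx (F ∪ {M.star z}) :=
      M.star_mem_cx_union_of_mem_cx_union hz (hF.1.symm ▸ hzF)
    have h₂ : M.star x ∈ S := M.cx_subset_cx
      (Set.union_subset (M.subset_cx_union_singleton F x) (Set.singleton_subset_iff.2 hz')) h₁
    exact hx (hF.1 ▸ M.M5 F _ (by rwa [M.star_star]))
  exact (M.isClosed_cx _).isSharp fun y hy hy' =>
    hF.mem_loops (hmem y hy hy') (hmem _ hy' (by rwa [M.star_star]))

lemma IsHemispace.isSharp {H : Set E} (hH : M.IsHemispace H) : M.IsSharp H := ⟨hH.1, hH.2.2⟩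

lemma IsHemispace.star_mem_of_notMem {H : Set E} (hH : M.IsHemispace H) {y : E} (hy : y ∉ H) :
    M.star y ∈ H := by
  have hy' : y ∈ H ∪ M.star '' H := hH.2.1 ▸ Set.mem_univ y
  exact M.mem_star_image.1 (hy'.resolve_left hy)

lemma IsHemispace.star_image {H : Set E} (hH : M.IsHemispace H) :
    M.IsHemispace (M.star '' H) := by
  refine ⟨?_, ?_, ?_⟩
  · rw [IsClosed, M.cx_star, hH.1]
  · rw [M.star_image_star_image, Set.union_comm, hH.2.1]
  · rw [M.star_image_star_image, Set.inter_comm, hH.2.2]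

lemma IsHemispace.eq_of_subset {H₁ H₂ : Set E} (h₁ : M.IsHemispace H₁)
    (h₂ : M.IsHemispace H₂) (h : H₁ ⊆ H₂) : H₁ = H₂ := by
  refine h.antisymm fun x hx => ?_
  by_contra hx₁
  exact hx₁ (h₁.1.loops_subset (h₂.isSharp.mem_loops hx (h (h₁.star_mem_of_notMem hx₁))))

lemma IsHemispace.isSharp_inter {H₁ H₂ : Set E} (h₁ : M.IsHemispace H₁)
    (h₂ : M.IsHemispace H₂) : M.IsSharp (H₁ ∩ H₂) :=
  IsClosed.isSharp ((Set.subset_inter (h₁.1.cx_subset Set.inter_subset_left)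
      (h₂.1.cx_subset Set.inter_subset_right)).antisymm (M.subset_cx _))
    fun _ hy hy' => h₁.isSharp.mem_loops hy.1 hy'.1

/-- A maximal sharp is a hemispace, since `IsSharp.cx_union_singleton` enlarges any sharp `F`
with `F ∪ F* ≠ E`. -/
lemma IsSharp.exists_isHemispace_superset [Finite E] {F : Set E} (hF : M.IsSharp F) :
    ∃ H, M.IsHemispace H ∧ F ⊆ H := by
  obtain ⟨H, hFH, hmax⟩ := Finite.exists_le_maximal (p := M.IsSharp) hF
  refine ⟨H, ⟨hmax.prop.1, Set.eq_univ_of_forall fun x => ?_, hmax.prop.2⟩, hFH⟩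
  by_contra hx
  rw [Set.mem_union, not_or, M.mem_star_image] at hx
  have hH := hmax.eq_of_subset (hmax.prop.cx_union_singleton hx.2)
    (M.subset_cx_union_singleton H x)
  exact hx.1 (hH ▸ M.mem_cx_union_singleton H x)

variable (M)

lemma isSharp_cx_singleton {e : E} (he : e ∉ M.loops) : M.IsSharp (M.cx {e}) := by
  have h := M.isSharp_loops.cx_union_singleton (M.star_mem_loops.not.2 he)
  rwa [Set.union_comm, M.cx_union_eq_of_subset (M.loops_subset_cx {e})] at h

lemma exists_isHemispace_mem [Finite E] {e : E} (he : e ∉ M.loops) :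
    ∃ H, M.IsHemispace H ∧ e ∈ H := by
  obtain ⟨H, hH, hsub⟩ := (M.isSharp_cx_singleton he).exists_isHemispace_superset
  exact ⟨H, hH, hsub (M.subset_cx _ rfl)⟩

lemma exists_isHemispace_mem_notMem [Finite E] {e f : E} (he : e ∉ M.loops)
    (hf : f ∉ M.loops) (hfe : f ∉ M.cx {e}) :
    ∃ H, M.IsHemispace H ∧ e ∈ H ∧ f ∉ H := by
  obtain ⟨H, hH, hsub⟩ := ((M.isSharp_cx_singleton he).cx_union_singleton
    (x := M.star f) (by rwa [M.star_star])).exists_isHemispace_superset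
  refine ⟨H, hH, hsub (M.subset_cx_union_singleton _ _ (M.subset_cx _ rfl)), fun hfH => ?_⟩
  exact hf (hH.isSharp.mem_loops hfH (hsub (M.mem_cx_union_singleton _ _)))

lemma acycParallel_topes_iff {e f : E} : AcycParallel M.topes e f ↔
    ∀ H, M.IsHemispace H → (e ∈ H ∧ e ∉ M.loops ↔ f ∈ H ∧ f ∉ M.loops) := by
  refine ⟨fun h H hH => h _ ⟨H, hH, rfl⟩, ?_⟩
  rintro h _ ⟨H, hH, rfl⟩
  exact h H hH

lemma pClass_topes_of_notMem_loops [Finite E] {e : E} (he : e ∉ M.loops) :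
    pClass M.topes e = M.cx {e} \ M.loops := by
  ext f
  rw [pClass, Set.mem_ofPred_eq, acycParallel_topes_iff]
  constructor
  · intro hef
    obtain ⟨H₀, hH₀, heH₀⟩ := M.exists_isHemispace_mem he
    obtain ⟨hfH₀, hf⟩ := (hef H₀ hH₀).1 ⟨heH₀, he⟩
    refine ⟨?_, hf⟩
    by_contra hfe
    obtain ⟨H, hH, heH, hfH⟩ := M.exists_isHemispace_mem_notMem he hf hfe
    exact hfH ((hef H hH).1 ⟨heH, he⟩).1
  · rintro ⟨hfe, hf⟩ H hH
    refine ⟨fun ⟨heH, _⟩ => ⟨hH.1.cx_subset (Set.singleton_subset_iff.2 heH) hfe, hf⟩,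
      fun ⟨hfH, _⟩ => ⟨?_, he⟩⟩
    exact hH.1.cx_subset (Set.singleton_subset_iff.2 hfH) (M.mem_cx_singleton_comm hfe hf)

lemma pClass_topes_of_mem_loops [Finite E] {e : E} (he : e ∈ M.loops) :
    pClass M.topes e = M.loops := by
  ext f
  rw [pClass, Set.mem_ofPred_eq, acycParallel_topes_iff]
  refine ⟨fun hef => ?_, fun hf H _ => by simp [he, hf]⟩
  by_contra hf
  obtain ⟨H, hH, hfH⟩ := M.exists_isHemispace_mem hf
  exact ((hef H hH).2 ⟨hfH, hf⟩).2 he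

variable {M}

lemma IsSharp.star_notMem_cx_union_pair {F : Set E} (hF : M.IsSharp F) {e g : E} (he : e ∉ F)
    (he' : M.star e ∉ F) (hg : g ∈ F) (hgL : g ∉ M.loops) :
    M.star g ∉ M.cx (F ∪ {e} ∪ {M.star e}) := by
  intro hg'
  have hgFe : M.star g ∉ M.cx (F ∪ {e}) := fun h =>
    hgL ((hF.cx_union_singleton he').mem_loops (M.subset_cx_union_singleton F e hg) h)
  have h := M.M6 (F ∪ {e}) (M.star g) e hg' hgFe
  rw [M.star_star, Set.union_sdiff_right] at h
  exact he (hF.1.cx_subset (Set.union_subset Set.sdiff_subset (Set.singleton_subset_iff.2 hg)) h)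

lemma IsSharp.mem_cx_union_of_mem_cx_insert_union {F : Set E} (hF : M.IsSharp F) {e f g : E}
    (he : e ∉ F) (he' : M.star e ∉ F) (hf' : M.star f ∈ M.cx (F ∪ {M.star e})) {A : Set E}
    (hA : A ⊆ F) (hg : g ∈ F) (hf : f ∈ M.cx (insert g A ∪ {e})) : f ∈ M.cx (A ∪ {e}) := by
  by_contra hfA
  have hgL : g ∉ M.loops := fun hgL => hfA <| M.cx_subset_cx (by
    rintro x ((rfl | hx) | rfl)
    · exact M.loops_subset_cx _ hgL
    · exact M.subset_cx _ (Or.inl hx)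
    · exact M.mem_cx_union_singleton _ _) hf
  have hfAg : f ∈ M.cx (A ∪ {e} ∪ {g}) := M.cx_mono (by
    rintro x ((rfl | hx) | rfl)
    exacts [Or.inr rfl, Or.inl (Or.inl hx), Or.inl (Or.inr rfl)]) hf
  have hg' := M.star_mem_cx_union_of_mem_cx_union hfAg hfA
  refine hF.star_notMem_cx_union_pair he he' hg hgL (M.cx_subset_cx ?_ hg')
  refine Set.union_subset ((Set.union_subset_union_left _ hA).trans
    (Set.subset_union_left.trans (M.subset_cx _))) (Set.singleton_subset_iff.2 ?_)
  exact M.cx_mono (Set.union_subset_union_left _ Set.subset_union_left) hf'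

/-- By finitarity only finitely many elements of `F` are involved; they are removed one at a
time by `IsSharp.mem_cx_union_of_mem_cx_insert_union`. -/
lemma IsSharp.mem_cx_singleton_of_mem_cx_union {F : Set E} (hF : M.IsSharp F) {e f : E}
    (he : e ∉ F) (he' : M.star e ∉ F) (hf' : M.star f ∈ M.cx (F ∪ {M.star e}))
    (hf : f ∈ M.cx (F ∪ {e})) : f ∈ M.cx {e} := by
  suffices h : ∀ A : Set E, A.Finite → A ⊆ F → f ∈ M.cx (A ∪ {e}) → f ∈ M.cx {e} by
    obtain ⟨B, hB, hBfin, hfB⟩ := M.finitary _ _ hf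
    refine h (B ∩ F) (hBfin.inter_of_left F) Set.inter_subset_right
      (M.cx_mono (fun x hx => ?_) hfB)
    rcases hB hx with hxF | rfl
    exacts [Or.inl ⟨hx, hxF⟩, Or.inr rfl]
  intro A hA
  induction A, hA using Set.Finite.induction_on with
  | empty => simp
  | @insert g A _ _ ih =>
    intro hgA hfgA
    exact ih (Set.insert_subset_iff.1 hgA).2 (hF.mem_cx_union_of_mem_cx_insert_union he he' hf'
      (Set.insert_subset_iff.1 hgA).2 (hgA (Set.mem_insert g A)) hfgA)

variable (M) in
def IsAdjacent (H₁ H₂ : Set E) : Prop :=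
  ∀ H, M.IsHemispace H → H₁ ∩ H₂ ⊆ H → H ≠ H₁ → H₁ ∩ H ⊆ H₂

section Adjacent

variable [Finite E] {H₁ H₂ : Set E}

lemma IsAdjacent.inter_subset_of_isSharp (hadj : M.IsAdjacent H₁ H₂) {S : Set E}
    (hS : M.IsSharp S) (hS₁₂ : H₁ ∩ H₂ ⊆ S) {x : E} (hx : x ∈ S) (hx₁ : x ∉ H₁) :
    H₁ ∩ S ⊆ H₂ := by
  obtain ⟨H, hH, hSH⟩ := hS.exists_isHemispace_superset
  exact (Set.inter_subset_inter_right _ hSH).trans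
    (hadj H hH (hS₁₂.trans hSH) fun h => hx₁ (h ▸ hSH hx))

/-- Both hypotheses of `IsSharp.mem_cx_singleton_of_mem_cx_union` for `F = H₁ ∩ H₂` hold, since
otherwise a sharp containing `F` and a point outside `H₁` would meet `H₁ \ H₂`. -/
lemma IsAdjacent.mem_cx_singleton (h₁ : M.IsHemispace H₁) (h₂ : M.IsHemispace H₂)
    (hadj : M.IsAdjacent H₁ H₂) {e f : E} (he : e ∈ H₁ \ H₂) (hf : f ∈ H₁ \ H₂) :
    f ∈ M.cx {e} := by
  set F := H₁ ∩ H₂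
  have hF : M.IsSharp F := h₁.isSharp_inter h₂
  have he₁ : M.star e ∉ H₁ := fun h => he.2 (h₂.1.loops_subset (h₁.isSharp.mem_loops he.1 h))
  have hf₁ : M.star f ∉ H₁ := fun h => hf.2 (h₂.1.loops_subset (h₁.isSharp.mem_loops hf.1 h))
  have heF : e ∉ F := fun h => he.2 h.2
  have he'F : M.star e ∉ F := fun h => he₁ h.1
  have hS : M.IsSharp (M.cx (F ∪ {M.star e})) := hF.cx_union_singleton (by rwa [M.star_star])
  have hf'S : M.star f ∈ M.cx (F ∪ {M.star e}) := by
    by_contra h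
    refine hf.2 (hadj.inter_subset_of_isSharp (hS.cx_union_singleton h)
      ((M.subset_cx_union_singleton _ _).trans (M.subset_cx_union_singleton _ _))
      (M.subset_cx_union_singleton _ _ (M.mem_cx_union_singleton _ _)) he₁
      ⟨hf.1, M.mem_cx_union_singleton _ _⟩)
  refine hF.mem_cx_singleton_of_mem_cx_union heF he'F hf'S ?_
  by_contra h
  have hT := (hF.cx_union_singleton he'F).cx_union_singleton (x := M.star f)
    (by rwa [M.star_star])
  exact he.2 (hadj.inter_subset_of_isSharp hT
    ((M.subset_cx_union_singleton _ _).trans (M.subset_cx_union_singleton _ _))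
    (M.mem_cx_union_singleton _ _) hf₁
    ⟨he.1, M.subset_cx_union_singleton _ _ (M.mem_cx_union_singleton _ _)⟩)

lemma IsAdjacent.flip_eq (h₁ : M.IsHemispace H₁) (h₂ : M.IsHemispace H₂)
    (hadj : M.IsAdjacent H₁ H₂) {e : E} (he : e ∈ H₁ \ H₂) :
    (H₁ \ M.cx {e}) ∪ M.cx {M.star e} = H₂ := by
  have hcx : ∀ x ∈ H₁, x ∉ H₂ → x ∈ M.cx {e} := fun x hx₁ hx₂ =>
    hadj.mem_cx_singleton h₁ h₂ he ⟨hx₁, hx₂⟩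
  refine (Set.union_subset (fun x hx => ?_) ?_).antisymm fun x hx₂ => ?_
  · by_contra hx₂
    exact hx.2 (hcx x hx.1 hx₂)
  · exact h₂.1.cx_subset (Set.singleton_subset_iff.2 (h₂.star_mem_of_notMem he.2))
  by_cases hx₁ : x ∈ H₁
  · by_cases hxe : x ∈ M.cx {e}
    · refine Or.inr (M.loops_subset_cx _ ?_)
      by_contra hxL
      exact he.2 (h₂.1.cx_subset (Set.singleton_subset_iff.2 hx₂)
        (M.mem_cx_singleton_comm hxe hxL))
    · exact Or.inl ⟨hx₁, hxe⟩
  · have hx' : M.star x ∉ H₂ := fun h => hx₁ (h₁.1.loops_subset (h₂.isSharp.mem_loops hx₂ h))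
    refine Or.inr ?_
    rw [M.cx_singleton_star, M.mem_star_image]
    exact hcx _ (h₁.star_mem_of_notMem hx₁) hx'

end Adjacent

/-- Among the hemispaces `H ≠ H₁` containing `H₁ ∩ H₂`, one with `H₁ ∩ H` maximal is adjacent
to `H₁`, and flipping `H₁` at any `e ∈ H₁ \ H` yields `H`. -/
lemma IsHemispace.exists_flip [Finite E] {H₁ H₂ : Set E} (h₁ : M.IsHemispace H₁)
    (h₂ : M.IsHemispace H₂) (hne : H₁ ≠ H₂) :
    ∃ e ∈ H₁ \ H₂, M.IsHemispace ((H₁ \ M.cx {e}) ∪ M.cx {M.star e}) := by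
  obtain ⟨H, ⟨hH, h₁₂H, hH₁⟩, hmax⟩ := Set.Finite.exists_maximalFor (H₁ ∩ ·)
    {H | M.IsHemispace H ∧ H₁ ∩ H₂ ⊆ H ∧ H ≠ H₁} (Set.toFinite _)
    ⟨H₂, h₂, Set.inter_subset_right, hne.symm⟩
  have hadj : M.IsAdjacent H₁ H := fun H' hH' hH'₁ hne' =>
    (hmax ⟨hH', (Set.subset_inter Set.inter_subset_left h₁₂H).trans hH'₁, hne'⟩
      (Set.subset_inter Set.inter_subset_left hH'₁)).trans Set.inter_subset_right
  obtain ⟨e, he⟩ := Set.sdiff_nonempty.2 fun h => hH₁ (h₁.eq_of_subset hH h).symm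
  exact ⟨e, ⟨he.1, fun he₂ => he.2 (h₁₂H ⟨he.1, he₂⟩)⟩, hadj.flip_eq h₁ hH he ▸ hH⟩

variable (M) [Finite E]

lemma topes_nonempty : M.topes.Nonempty := by
  obtain ⟨H, hH, -⟩ := M.isSharp_loops.exists_isHemispace_superset
  exact ⟨_, H, hH, rfl⟩

lemma sUnion_topes : ⋃₀ M.topes = M.loopsᶜ := by
  refine Set.Subset.antisymm ?_ fun x hx => ?_
  · rintro x ⟨_, ⟨H, -, rfl⟩, hx⟩
    exact hx.2
  · obtain ⟨H, hH, hxH⟩ := M.exists_isHemispace_mem hx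
    exact ⟨H \ M.loops, ⟨H, hH, rfl⟩, hxH, hx⟩

lemma isPreacycloid_topes : IsPreacycloid M.star M.topes := by
  refine ⟨M.star_star, M.star_ne, ?_, ?_⟩
  · rintro _ ⟨H, hH, rfl⟩
    rw [M.star_image_diff_loops, M.sUnion_topes]
    refine ⟨Set.eq_empty_of_forall_notMem fun x hx => hx.1.2 (hH.2.2 ▸ ⟨hx.1.1, hx.2.1⟩), ?_⟩
    rw [← Set.union_sdiff_distrib, hH.2.1, Set.compl_eq_univ_sdiff]
  · rintro _ ⟨H, hH, rfl⟩
    exact ⟨_, hH.star_image, M.star_image_diff_loops H⟩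

lemma topes_exchange : ∀ T₁ ∈ M.topes, ∀ T₂ ∈ M.topes, T₁ ≠ T₂ →
    ∃ e ∈ T₁ \ T₂, (T₁ \ pClass M.topes e) ∪ M.star '' pClass M.topes e ∈ M.topes := by
  rintro _ ⟨H₁, h₁, rfl⟩ _ ⟨H₂, h₂, rfl⟩ hne
  obtain ⟨e, he, hflip⟩ := h₁.exists_flip h₂ fun h => hne (h ▸ rfl)
  have heL : e ∉ M.loops := fun h => he.2 (h₂.1.loops_subset h)
  refine ⟨e, ⟨⟨he.1, heL⟩, fun h => he.2 h.1⟩, _, hflip, ?_⟩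
  rw [M.pClass_topes_of_notMem_loops heL, M.star_image_diff_loops, ← M.cx_singleton_star]
  ext x
  simp only [Set.mem_union, Set.mem_sdiff]
  tauto

lemma pClass_topes_eq_singleton_iff :
    (∀ e : E, pClass M.topes e = {e}) ↔ M.loops = ∅ ∧ ∀ e : E, M.cx {e} = {e} := by
  refine ⟨fun h => ?_, fun ⟨hL, hcx⟩ e => ?_⟩
  · have hL : M.loops = ∅ := Set.eq_empty_of_forall_notMem fun e he => M.star_ne e <| by
      have he' : M.star e ∈ M.loops := M.star_mem_loops.2 he
      rwa [← M.pClass_topes_of_mem_loops he, h e] at he'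
    refine ⟨hL, fun e => ?_⟩
    have he := h e
    rwa [M.pClass_topes_of_notMem_loops (hL ▸ Set.notMem_empty e), hL, Set.sdiff_empty] at he
  · rw [M.pClass_topes_of_notMem_loops (hL ▸ Set.notMem_empty e), hL, Set.sdiff_empty, hcx]

end OMatroid

/-- the tope preacycloid of a finite oriented matroid is an acycloid, and
`M` is an oriented geometry (no loops and all singletons closed) iff this acycloid is
simple (all parallelism classes are singletons). -/
theorem stmt_6 {E : Type*} [Finite E] (M : OMatroid E) :
    IsAcycloid M.star M.topes ∧
    ((M.loops = ∅ ∧ ∀ e : E, M.cx {e} = {e}) ↔ ∀ e : E, pClass M.topes e = {e}) :=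
  ⟨⟨M.isPreacycloid_topes, M.topes_nonempty, M.topes_exchange⟩,
    M.pClass_topes_eq_singleton_iff.symm⟩
end

section
/- Let R be a faithful, complete signed groupoid set and let (x, wᵢ, yᵢ, zᵢ), i ∈ I, be a family of squares all with the same morphism x : b → d. Then there exists a square (x, w, y, z) with w = ⋁ᵢ wᵢ and y = ⋁ᵢ yᵢ (joins in the weak orders at b and d respectively). -/
open CategoryTheory

universe u v

/-- A signed groupoid set: a groupoid `G` acting on a family of definitely involuted
sets `R a` (`a ∈ Ob G`), with involution `neg`, positive parts `pos a`, and the action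
commuting with the involution. -/
structure SGS (G : Type u) [Groupoid G] (R : G → Type v) where
  neg : ∀ {a : G}, R a → R a
  pos : ∀ a : G, Set (R a)
  act : ∀ {a b : G}, (b ⟶ a) → R b → R a
  neg_neg : ∀ {a : G} (x : R a), neg (neg x) = x
  pos_iff : ∀ {a : G} (x : R a), x ∈ pos a ↔ neg x ∉ pos a
  act_id : ∀ {a : G} (x : R a), act (𝟙 a) x = x
  act_comp : ∀ {a b c : G} (g : c ⟶ b) (f : b ⟶ a) (x : R c),
      act f (act g x) = act (g ≫ f) x
  act_neg : ∀ {a b : G} (f : b ⟶ a) (x : R b), act f (neg x) = neg (act f x)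

/-- The morphisms of `G` with codomain `a`. -/
abbrev SHoms (G : Type u) [Groupoid G] (a : G) : Type _ := Σ b : G, (b ⟶ a)

namespace SGS

variable {G : Type u} [Groupoid G] {R : G → Type v} (S : SGS G R)

/-- The inversion set of a morphism `f : b ⟶ a`: positive roots at `a` sent to
negative roots at `b` by `f⁻¹`. -/
def Phi {a b : G} (f : b ⟶ a) : Set (R a) :=
  {α | α ∈ S.pos a ∧ S.act (Groupoid.inv f) α ∉ S.pos b}

/-- The inversion set of an element of `SHoms G a`. -/
def PhiS {a : G} (g : SHoms G a) : Set (R a) := S.Phi g.2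

/-- `S` is faithful if only identity morphisms have empty inversion set. -/
def Faithful : Prop :=
  ∀ ⦃a b : G⦄ (f : b ⟶ a), S.Phi f = ∅ → ∃ h : b = a, f = eqToHom h

/-- `j` is an upper bound of `F` in the weak order at `a`. -/
def IsUB {a : G} (F : Set (SHoms G a)) (j : SHoms G a) : Prop :=
  ∀ g ∈ F, S.PhiS g ⊆ S.PhiS j

/-- `j` is a least upper bound of `F` in the weak order at `a`. -/
def IsLUBw {a : G} (F : Set (SHoms G a)) (j : SHoms G a) : Prop :=
  S.IsUB F j ∧ ∀ k : SHoms G a, S.IsUB F k → S.PhiS j ⊆ S.PhiS k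

/-- `S` is complete: the weak order at every object is a complete lattice
(equivalently, every family of morphisms with a common codomain has a join). -/
def Complete : Prop := ∀ (a : G) (F : Set (SHoms G a)), ∃ j : SHoms G a, S.IsLUBw F j

/-- `S` is finite: finitely many objects, morphisms and roots. -/
def FiniteSGS (_S : SGS G R) : Prop :=
  Finite G ∧ (∀ a b : G, Finite (a ⟶ b)) ∧ ∀ a : G, Finite (R a)

/-- A square `(x, w, y, z)`: a commuting square `xw = yz` with `x(Φ_w) = Φ_y`. -/
def Square {a b c d : G} (x : b ⟶ d) (w : a ⟶ b) (y : c ⟶ d) (z : a ⟶ c) : Prop :=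
  w ≫ x = z ≫ y ∧ S.act x '' S.Phi w = S.Phi y

/-- The positive real roots at `a`: the union of all inversion sets at `a`. -/
def posRe (a : G) : Set (R a) := ⋃ g : SHoms G a, S.PhiS g

/-- An atomic morphism: an atom of the weak order at its codomain. -/
def Atomic {a : G} (g : SHoms G a) : Prop :=
  S.PhiS g ≠ ∅ ∧ ∀ h : SHoms G a, S.PhiS h ⊆ S.PhiS g →
    S.PhiS h = ∅ ∨ S.PhiS h = S.PhiS g

/-- A simple morphism: one whose inversion set is a singleton. -/
def Simple {a b : G} (f : b ⟶ a) : Prop := ∃ α : R a, S.Phi f = {α}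

/-- Interval finiteness: every interval `[1ₐ, g]` of a weak order is finite. -/
def IntervalFinite : Prop :=
  ∀ (a : G) (g : SHoms G a), {h : SHoms G a | S.PhiS h ⊆ S.PhiS g}.Finite

/-- Preprincipal: interval finite, and the inversion set of an atomic morphism is
contained in, or disjoint from, any other inversion set at the same object. -/
def Preprincipal : Prop :=
  S.IntervalFinite ∧ ∀ (a : G) (s g : SHoms G a), S.Atomic s →
    S.PhiS s ⊆ S.PhiS g ∨ S.PhiS s ∩ S.PhiS g = ∅

/-- Antipodal: the weak order at each object has a maximum element. -/
def Antipodal : Prop :=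
  ∀ a : G, ∃ ω : SHoms G a, ∀ g : SHoms G a, S.PhiS g ⊆ S.PhiS ω

end SGS

/-!
Write `W` and `Y` for the joins of the `wᵢ` and of the `yᵢ`. By the Join Orthogonality
Property, `Φ_Y` misses `Φ_x` (each `Φ_{yᵢ} = x Φ_{wᵢ}` does) and `Φ_W` misses `Φ_{x⁻¹}`, so
`Φ_{xW} = Φ_x ∪ x Φ_W` is an upper bound of the `Φ_{yᵢ}`; hence `Φ_Y ⊆ x Φ_W`. The same
argument for `x⁻¹`, with the roles of the two families exchanged, gives `Φ_W ⊆ x⁻¹ Φ_Y`.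
The third side of the square is forced: `z = W x Y⁻¹`.
-/

open Set

lemma CategoryTheory.Groupoid.inv_inv {G : Type u} [Groupoid G] {a b : G} (f : b ⟶ a) :
    Groupoid.inv (Groupoid.inv f) = f := by
  simp [Groupoid.inv_eq_inv]

namespace SGS

variable {G : Type u} [Groupoid G] {R : G → Type v} (S : SGS G R)

lemma act_act_inv {a b : G} (f : b ⟶ a) (α : R a) :
    S.act f (S.act (Groupoid.inv f) α) = α := by
  rw [S.act_comp, Groupoid.inv_comp, S.act_id]

lemma act_inv_act {a b : G} (f : b ⟶ a) (β : R b) :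
    S.act (Groupoid.inv f) (S.act f β) = β := by
  rw [S.act_comp, Groupoid.comp_inv, S.act_id]

lemma image_act_inv_image_act {a b : G} (f : b ⟶ a) (s : Set (R b)) :
    S.act (Groupoid.inv f) '' (S.act f '' s) = s := by
  simp only [image_image, act_inv_act, image_id']

lemma image_act_image_act_inv {a b : G} (f : b ⟶ a) (t : Set (R a)) :
    S.act f '' (S.act (Groupoid.inv f) '' t) = t := by
  simp only [image_image, act_act_inv, image_id']

lemma neg_mem_pos_iff {a : G} (α : R a) : S.neg α ∈ S.pos a ↔ α ∉ S.pos a := by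
  rw [S.pos_iff, S.neg_neg]

lemma Phi_subset_pos {a b : G} (f : b ⟶ a) : S.Phi f ⊆ S.pos a := fun _ h => h.1

lemma mem_Phi_inv_iff {a b : G} (f : b ⟶ a) (β : R b) :
    β ∈ S.Phi (Groupoid.inv f) ↔ β ∈ S.pos b ∧ S.act f β ∉ S.pos a := by
  rw [Phi, mem_ofPred_eq, Groupoid.inv_inv]

lemma mem_Phi_comp_iff {a b e : G} (w : e ⟶ b) (f : b ⟶ a) (α : R a) :
    α ∈ S.Phi (w ≫ f) ↔
      α ∈ S.pos a ∧ S.act (Groupoid.inv w) (S.act (Groupoid.inv f) α) ∉ S.pos e := by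
  have h : Groupoid.inv (w ≫ f) = Groupoid.inv f ≫ Groupoid.inv w := by
    simp [Groupoid.inv_eq_inv]
  rw [Phi, mem_ofPred_eq, h, ← S.act_comp]

lemma neg_act_inv_mem_Phi_inv {a b : G} (f : b ⟶ a) {α : R a} (hα : α ∈ S.Phi f) :
    S.neg (S.act (Groupoid.inv f) α) ∈ S.Phi (Groupoid.inv f) := by
  rw [mem_Phi_inv_iff, S.act_neg, act_act_inv, neg_mem_pos_iff, neg_mem_pos_iff, not_not]
  exact ⟨hα.2, hα.1⟩

lemma disjoint_image_act_Phi {a b e : G} (w : e ⟶ b) (f : b ⟶ a) :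
    Disjoint (S.act f '' S.Phi w) (S.Phi f) := by
  rw [Set.disjoint_left]
  rintro _ ⟨β, hβ, rfl⟩ hf
  exact hf.2 (by rw [act_inv_act]; exact hβ.1)

lemma image_act_Phi_subset_pos_iff {a b e : G} (w : e ⟶ b) (f : b ⟶ a) :
    S.act f '' S.Phi w ⊆ S.pos a ↔ Disjoint (S.Phi w) (S.Phi (Groupoid.inv f)) := by
  simp only [image_subset_iff, Set.disjoint_left, mem_Phi_inv_iff, not_and, not_not]
  exact ⟨fun h β hβ _ => h hβ, fun h β hβ => h hβ hβ.1⟩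

lemma Phi_comp_of_disjoint {a b e : G} (w : e ⟶ b) (f : b ⟶ a)
    (hdisj : Disjoint (S.Phi w) (S.Phi (Groupoid.inv f))) :
    S.Phi (w ≫ f) = S.Phi f ∪ S.act f '' S.Phi w := by
  have hpos := (S.image_act_Phi_subset_pos_iff w f).2 hdisj
  ext α
  rw [mem_Phi_comp_iff]
  constructor
  · rintro ⟨hα, hne⟩
    by_cases hβ : S.act (Groupoid.inv f) α ∈ S.pos b
    · exact Or.inr ⟨_, ⟨hβ, hne⟩, S.act_act_inv f α⟩
    · exact Or.inl ⟨hα, hβ⟩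
  · rintro (hf | ⟨β, hβ, rfl⟩)
    · refine ⟨hf.1, fun hpos' => Set.disjoint_left.1 hdisj ?_ (S.neg_act_inv_mem_Phi_inv f hf)⟩
      refine ⟨(S.neg_mem_pos_iff _).2 hf.2, ?_⟩
      rwa [S.act_neg, neg_mem_pos_iff, not_not]
    · exact ⟨hpos ⟨β, hβ, rfl⟩, by rw [act_inv_act]; exact hβ.2⟩

lemma mem_Phi_comp_of_act_inv_mem {a c e : G} (m : e ⟶ c) (h : c ⟶ a) {α : R a}
    (hα : α ∈ S.pos a) (hm : S.act (Groupoid.inv h) α ∈ S.Phi m) : α ∈ S.Phi (m ≫ h) :=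
  (S.mem_Phi_comp_iff m h α).2 ⟨hα, hm.2⟩

lemma disjoint_Phi_comp_of_Phi_inv_subset {a c e : G} (m : e ⟶ c) (h : c ⟶ a)
    (hle : S.Phi (Groupoid.inv h) ⊆ S.Phi m) : Disjoint (S.Phi (m ≫ h)) (S.Phi h) := by
  rw [Set.disjoint_left]
  intro α hmh hh
  have hneg := (hle (S.neg_act_inv_mem_Phi_inv h hh)).2
  rw [S.act_neg, neg_mem_pos_iff, not_not] at hneg
  exact ((S.mem_Phi_comp_iff m h α).1 hmh).2 hneg

/-- The Join Orthogonality Property. The join `m` of `h⁻¹` and the `g h⁻¹`, `g ∈ F`, satisfies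
`Φ_{h⁻¹} ⊆ Φ_m`, so `m h` is an upper bound of `F` whose inversion set misses `Φ_h`. -/
theorem disjoint_Phi_of_isLUBw (hcomp : S.Complete) {a : G} {F : Set (SHoms G a)}
    {j : SHoms G a} (hj : S.IsLUBw F j) {c : G} (h : c ⟶ a)
    (hF : ∀ g ∈ F, Disjoint (S.PhiS g) (S.Phi h)) : Disjoint (S.PhiS j) (S.Phi h) := by
  obtain ⟨m, hm⟩ := hcomp c <|
    insert ⟨a, Groupoid.inv h⟩ ((fun g : SHoms G a => ⟨g.1, g.2 ≫ Groupoid.inv h⟩) '' F)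
  have hub : S.IsUB F ⟨m.1, m.2 ≫ h⟩ := by
    intro g hg α hα
    have hgh : S.Phi (g.2 ≫ Groupoid.inv h) ⊆ S.PhiS m :=
      hm.1 _ (mem_insert_of_mem _ (mem_image_of_mem _ hg))
    refine S.mem_Phi_comp_of_act_inv_mem m.2 h hα.1 (hgh ?_)
    rw [Phi_comp_of_disjoint _ _ _ (by rw [Groupoid.inv_inv]; exact hF g hg)]
    exact Or.inr (mem_image_of_mem _ hα)
  exact (S.disjoint_Phi_comp_of_Phi_inv_subset m.2 h (hm.1 _ (mem_insert _ _))).mono_left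
    (hj.2 _ hub)

theorem PhiS_subset_image_act_of_isLUBw (hcomp : S.Complete) {b d : G} (x : b ⟶ d) {ι : Type*}
    {w : ι → SHoms G b} {y : ι → SHoms G d} (hwy : ∀ i, S.act x '' S.PhiS (w i) = S.PhiS (y i))
    {W : SHoms G b} (hW : S.IsLUBw (range w) W) {Y : SHoms G d} (hY : S.IsLUBw (range y) Y) :
    S.PhiS Y ⊆ S.act x '' S.PhiS W := by
  have hYx : Disjoint (S.PhiS Y) (S.Phi x) := by
    refine S.disjoint_Phi_of_isLUBw hcomp hY x ?_
    rintro _ ⟨i, rfl⟩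
    rw [← hwy i]
    exact S.disjoint_image_act_Phi _ x
  have hWx : Disjoint (S.PhiS W) (S.Phi (Groupoid.inv x)) := by
    refine S.disjoint_Phi_of_isLUBw hcomp hW _ ?_
    rintro _ ⟨i, rfl⟩
    rw [PhiS, ← image_act_Phi_subset_pos_iff]
    exact (hwy i).trans_subset (S.Phi_subset_pos _)
  have hWx_eq := S.Phi_comp_of_disjoint W.2 x hWx
  have hub : S.IsUB (range y) ⟨W.1, W.2 ≫ x⟩ := by
    rintro _ ⟨i, rfl⟩
    change S.PhiS (y i) ⊆ S.Phi (W.2 ≫ x)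
    rw [hWx_eq, ← hwy i]
    exact subset_union_of_subset_right (image_mono (hW.1 _ ⟨i, rfl⟩)) _
  intro α hα
  have hαWx : α ∈ S.Phi (W.2 ≫ x) := hY.2 _ hub hα
  rw [hWx_eq] at hαWx
  exact hαWx.resolve_left (Set.disjoint_left.1 hYx hα)

end SGS

theorem stmt_10_general {G : Type u} [Groupoid G] {R : G → Type v} (S : SGS G R)
    (hcomp : S.Complete)
    {b d : G} (x : b ⟶ d) {I : Type*} (a c : I → G)
    (w : ∀ i : I, a i ⟶ b) (y : ∀ i : I, c i ⟶ d) (z : ∀ i : I, a i ⟶ c i)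
    (hsq : ∀ i : I, S.Square x (w i) (y i) (z i)) :
    ∃ (a' c' : G) (w' : a' ⟶ b) (y' : c' ⟶ d) (z' : a' ⟶ c'),
      S.Square x w' y' z' ∧
      S.IsLUBw (Set.range fun i : I => (⟨a i, w i⟩ : SHoms G b)) ⟨a', w'⟩ ∧
      S.IsLUBw (Set.range fun i : I => (⟨c i, y i⟩ : SHoms G d)) ⟨c', y'⟩ := by
  obtain ⟨W, hW⟩ := hcomp b (Set.range fun i : I => (⟨a i, w i⟩ : SHoms G b))
  obtain ⟨Y, hY⟩ := hcomp d (Set.range fun i : I => (⟨c i, y i⟩ : SHoms G d))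
  have hwy : ∀ i, S.act x '' S.PhiS ⟨a i, w i⟩ = S.PhiS ⟨c i, y i⟩ := fun i => (hsq i).2
  have hYW : S.Phi Y.2 ⊆ S.act x '' S.Phi W.2 :=
    S.PhiS_subset_image_act_of_isLUBw hcomp x hwy hW hY
  have hyw : ∀ i, S.act (Groupoid.inv x) '' S.PhiS ⟨c i, y i⟩ = S.PhiS ⟨a i, w i⟩ := fun i => by
    rw [← hwy i, S.image_act_inv_image_act]
  have hWY : S.Phi W.2 ⊆ S.act (Groupoid.inv x) '' S.Phi Y.2 :=
    S.PhiS_subset_image_act_of_isLUBw hcomp (Groupoid.inv x) hyw hY hW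
  refine ⟨W.1, Y.1, W.2, Y.2, W.2 ≫ x ≫ Groupoid.inv Y.2, ⟨by simp, ?_⟩, hW, hY⟩
  exact ((image_mono hWY).trans_eq (S.image_act_image_act_inv x _)).antisymm hYW

/-- in a faithful complete signed groupoid set, a family of squares
`(x, wᵢ, yᵢ, zᵢ)` with common `x : b ⟶ d` admits a square `(x, w, y, z)` where
`w = ⋁ᵢ wᵢ` and `y = ⋁ᵢ yᵢ` in the weak orders at `b` and `d`. -/
theorem stmt_10 {G : Type u} [Groupoid G] {R : G → Type v} (S : SGS G R)
    (hfa : S.Faithful) (hcomp : S.Complete)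
    {b d : G} (x : b ⟶ d) {I : Type*} (a c : I → G)
    (w : ∀ i : I, a i ⟶ b) (y : ∀ i : I, c i ⟶ d) (z : ∀ i : I, a i ⟶ c i)
    (hsq : ∀ i : I, S.Square x (w i) (y i) (z i)) :
    ∃ (a' c' : G) (w' : a' ⟶ b) (y' : c' ⟶ d) (z' : a' ⟶ c'),
      S.Square x w' y' z' ∧
      S.IsLUBw (Set.range fun i : I => (⟨a i, w i⟩ : SHoms G b)) ⟨a', w'⟩ ∧
      S.IsLUBw (Set.range fun i : I => (⟨c i, y i⟩ : SHoms G d)) ⟨c', y'⟩ :=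
  stmt_10_general S hcomp x a c w y z hsq
end
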